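/- If θ_max = max_i θ_i < 1/2, then F has a unique fixed point x* in Δ_n, and every trajectory of the single-issue model converges to it exponentially fast: there exist M ≥ 0 and ρ ∈ (0,1) such that ‖x(k) − x*‖ ≤ M·ρ^k for all k ≥ 0 (one may take ρ = 2θ_max). -/
import Mathlib


open Matrix

/-- `W(x) = diag(x) + (I - diag(x)) C` -/
noncomputable def Wmat {n : ℕ} (C : Matrix (Fin n) (Fin n) ℝ) (x : Fin n → ℝ) :
    Matrix (Fin n) (Fin n) ℝ :=
  Matrix.diagonal x + (1 - Matrix.diagonal x) * C

/-- `F(x) = (I - Θ)(I - W(x)ᵀΘ)⁻¹ (1/n) 1_n` -/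
noncomputable def Fmap {n : ℕ} (C : Matrix (Fin n) (Fin n) ℝ) (θ : Fin n → ℝ)
    (x : Fin n → ℝ) : Fin n → ℝ :=
  ((1 - Matrix.diagonal θ) * (1 - (Wmat C x)ᵀ * Matrix.diagonal θ)⁻¹).mulVec
    (fun _ => 1 / (n : ℝ))

/-- The simplex `Δ_n`. -/
def simplex (n : ℕ) : Set (Fin n → ℝ) := {x | (∀ i, 0 ≤ x i) ∧ ∑ i, x i = 1}

noncomputable def Amat {n : ℕ} (C : Matrix (Fin n) (Fin n) ℝ) (θ : Fin n → ℝ)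
    (x : Fin n → ℝ) : Matrix (Fin n) (Fin n) ℝ :=
  1 - Matrix.diagonal θ * Wmat C x
noncomputable def Bmat {n : ℕ} (C : Matrix (Fin n) (Fin n) ℝ) (θ : Fin n → ℝ)
    (x : Fin n → ℝ) : Matrix (Fin n) (Fin n) ℝ :=
  (Amat C θ x)⁻¹ * (1 - Matrix.diagonal θ)

section basic
variable {n : ℕ} (C : Matrix (Fin n) (Fin n) ℝ) (x : Fin n → ℝ)

lemma Wmat_apply (i j : Fin n) :
    Wmat C x i j = (if i = j then x i else 0) + (1 - x i) * C i j := by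
  simp [Wmat, Matrix.add_apply, Matrix.sub_mul, Matrix.sub_apply, Matrix.diagonal_mul,
    Matrix.diagonal_apply, Matrix.one_mul]
  ring

lemma Wmat_nonneg (hC : ∀ i j, 0 ≤ C i j) (h0 : ∀ i, 0 ≤ x i) (h1 : ∀ i, x i ≤ 1)
    (i j : Fin n) : 0 ≤ Wmat C x i j := by
  rw [Wmat_apply]
  have h1' := h1 i
  have h0' := h0 i
  have hc := hC i j
  have : 0 ≤ (1 - x i) * C i j := mul_nonneg (by linarith) hc
  split <;> linarith

lemma Wmat_row (hC : ∀ i, ∑ j, C i j = 1) (i : Fin n) : ∑ j, Wmat C x i j = 1 := by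
  simp only [Wmat_apply, Finset.sum_add_distrib, ← Finset.mul_sum, hC,
    Finset.sum_ite_eq, Finset.mem_univ, if_true]
  ring
end basic

section pre
variable {n : ℕ} {C : Matrix (Fin n) (Fin n) ℝ} {θ x : Fin n → ℝ}

lemma Amat_mulVec (v : Fin n → ℝ) (i : Fin n) :
    (Amat C θ x).mulVec v i = v i - θ i * ∑ l, Wmat C x i l * v l := by
  simp only [Amat, Matrix.sub_mulVec, Matrix.one_mulVec, ← Matrix.mulVec_mulVec,
    Matrix.mulVec_diagonal, Pi.sub_apply]
  rw [Matrix.mulVec, dotProduct]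

lemma Amat_ker (hθ1 : ∀ i, θ i < 1)
    (hW0 : ∀ i j, 0 ≤ Wmat C x i j) (hW1 : ∀ i, ∑ j, Wmat C x i j = 1)
    (hθ0 : ∀ i, 0 ≤ θ i)
    (v : Fin n → ℝ) (hv : (Amat C θ x).mulVec v = 0) : v = 0 := by
  rcases Nat.eq_zero_or_pos n with h0 | hpos
  · funext i; exact absurd i.2 (by omega)
  have hne : (Finset.univ : Finset (Fin n)).Nonempty := by
    simpa [Finset.univ_nonempty_iff] using Fin.pos_iff_nonempty.mp hpos
  obtain ⟨i, -, hi⟩ := Finset.exists_max_image Finset.univ (fun i => |v i|) hne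
  have hvi : v i = θ i * ∑ l, Wmat C x i l * v l := by
    have := congrFun hv i
    rw [Amat_mulVec] at this
    simpa [sub_eq_zero] using this
  have hbd : |v i| ≤ θ i * |v i| := by
    calc |v i| = θ i * |∑ l, Wmat C x i l * v l| := by
          rw [hvi, abs_mul, abs_of_nonneg (hθ0 i)]
      _ ≤ θ i * ∑ l, Wmat C x i l * |v i| := by
          refine mul_le_mul_of_nonneg_left ?_ (hθ0 i)
          calc |∑ l, Wmat C x i l * v l| ≤ ∑ l, |Wmat C x i l * v l| :=
                Finset.abs_sum_le_sum_abs _ _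
            _ ≤ ∑ l, Wmat C x i l * |v i| := by
                refine Finset.sum_le_sum fun l _ => ?_
                rw [abs_mul, abs_of_nonneg (hW0 i l)]
                exact mul_le_mul_of_nonneg_left (hi l (Finset.mem_univ l)) (hW0 i l)
      _ = θ i * |v i| := by rw [← Finset.sum_mul, hW1 i, one_mul]
  have hvi0 : |v i| ≤ 0 := by nlinarith [hθ1 i, abs_nonneg (v i)]
  funext l
  have := (hi l (Finset.mem_univ l)).trans hvi0
  have : |v l| = 0 := le_antisymm this (abs_nonneg _)
  simpa using abs_eq_zero.mp this

lemma Amat_isUnit (hθ1 : ∀ i, θ i < 1)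
    (hW0 : ∀ i j, 0 ≤ Wmat C x i j) (hW1 : ∀ i, ∑ j, Wmat C x i j = 1)
    (hθ0 : ∀ i, 0 ≤ θ i) : IsUnit (Amat C θ x).det := by
  rw [isUnit_iff_ne_zero]
  intro hdet
  obtain ⟨v, hv0, hv⟩ := (Matrix.exists_mulVec_eq_zero_iff).mpr hdet
  exact hv0 (Amat_ker hθ1 hW0 hW1 hθ0 v hv)
end pre


section b
variable {n : ℕ} {C : Matrix (Fin n) (Fin n) ℝ} {θ x : Fin n → ℝ}

lemma Bmat_eq (hA : IsUnit (Amat C θ x).det) :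
    Bmat C θ x = (1 - Matrix.diagonal θ) + Matrix.diagonal θ * Wmat C x * Bmat C θ x := by
  have h : Amat C θ x * Bmat C θ x = 1 - Matrix.diagonal θ := by
    rw [Bmat, ← Matrix.mul_assoc, Matrix.mul_nonsing_inv _ hA, Matrix.one_mul]
  have h2 : Bmat C θ x - Matrix.diagonal θ * Wmat C x * Bmat C θ x = 1 - Matrix.diagonal θ := by
    rw [← h, Amat, Matrix.sub_mul, Matrix.one_mul]
  linear_combination (norm := abel) h2

lemma Bmat_apply (hA : IsUnit (Amat C θ x).det) (j i : Fin n) :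
    Bmat C θ x j i = (if j = i then 1 - θ j else 0)
      + θ j * ∑ l, Wmat C x j l * Bmat C θ x l i := by
  conv_lhs => rw [Bmat_eq hA]
  rw [Matrix.add_apply, Matrix.mul_assoc, Matrix.diagonal_mul, Matrix.mul_apply]
  congr 1
  · simp [Matrix.sub_apply, Matrix.one_apply, Matrix.diagonal_apply]
    split <;> simp

lemma Bmat_nonneg (hA : IsUnit (Amat C θ x).det)
    (hθ0 : ∀ i, 0 ≤ θ i) (hθ1 : ∀ i, θ i < 1)
    (hW0 : ∀ i j, 0 ≤ Wmat C x i j) (hW1 : ∀ i, ∑ j, Wmat C x i j = 1)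
    (j i : Fin n) : 0 ≤ Bmat C θ x j i := by
  have hne : (Finset.univ : Finset (Fin n)).Nonempty := ⟨j, Finset.mem_univ j⟩
  obtain ⟨j0, -, hj0⟩ := Finset.exists_min_image Finset.univ
      (fun l => Bmat C θ x l i) hne
  set m := Bmat C θ x j0 i with hm
  have key : m = (if j0 = i then 1 - θ j0 else 0)
      + θ j0 * ∑ l, Wmat C x j0 l * Bmat C θ x l i := Bmat_apply hA j0 i
  have h1 : θ j0 * m ≤ θ j0 * ∑ l, Wmat C x j0 l * Bmat C θ x l i := by
    refine mul_le_mul_of_nonneg_left ?_ (hθ0 j0)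
    calc m = ∑ l, Wmat C x j0 l * m := by rw [← Finset.sum_mul, hW1 j0, one_mul]
      _ ≤ ∑ l, Wmat C x j0 l * Bmat C θ x l i :=
        Finset.sum_le_sum fun l _ =>
          mul_le_mul_of_nonneg_left (hj0 l (Finset.mem_univ l)) (hW0 j0 l)
  have h2 : (0:ℝ) ≤ (if j0 = i then 1 - θ j0 else 0) := by
    split
    · linarith [hθ1 j0]
    · exact le_refl 0
  have hm0 : 0 ≤ m := by nlinarith [hθ1 j0]
  exact le_trans hm0 (hj0 j (Finset.mem_univ j))

lemma Bmat_rowsum (hA : IsUnit (Amat C θ x).det)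
    (hθ1 : ∀ i, θ i < 1) (hθ0 : ∀ i, 0 ≤ θ i)
    (hW0 : ∀ i j, 0 ≤ Wmat C x i j) (hW1 : ∀ i, ∑ j, Wmat C x i j = 1)
    (j : Fin n) : ∑ i, Bmat C θ x j i = 1 := by
  have hker := Amat_ker (C := C) (x := x) hθ1 hW0 hW1 hθ0
  set u : Fin n → ℝ := fun l => (∑ i, Bmat C θ x l i) - 1 with hu
  have h : (Amat C θ x).mulVec u = 0 := by
    funext l
    rw [Amat_mulVec, Pi.zero_apply]
    have hrow : ∑ i, Bmat C θ x l i
        = (1 - θ l) + θ l * ∑ k, Wmat C x l k * ∑ i, Bmat C θ x k i := by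
      calc ∑ i, Bmat C θ x l i
          = ∑ i, ((if l = i then 1 - θ l else 0)
              + θ l * ∑ k, Wmat C x l k * Bmat C θ x k i) := by
            exact Finset.sum_congr rfl fun i _ => Bmat_apply hA l i
        _ = (1 - θ l) + θ l * ∑ k, Wmat C x l k * ∑ i, Bmat C θ x k i := by
            rw [Finset.sum_add_distrib, Finset.sum_ite_eq, if_pos (Finset.mem_univ l),
              ← Finset.mul_sum, Finset.sum_comm]
            congr 2
            exact Finset.sum_congr rfl fun k _ => by rw [← Finset.mul_sum]
    have hWu : ∑ k, Wmat C x l k * u k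
        = (∑ k, Wmat C x l k * ∑ i, Bmat C θ x k i) - 1 := by
      simp only [hu, mul_sub, Finset.sum_sub_distrib, mul_one, hW1 l]
    rw [hu]
    simp only
    rw [hWu]
    have := hW1 l
    linarith [hrow]
  have := congrFun (hker u h) j
  simp only [hu, Pi.zero_apply] at this
  linarith [this]

lemma Fmap_eq (hA : IsUnit (Amat C θ x).det) :
    Fmap C θ x = fun i => (1 / (n:ℝ)) * ∑ j, Bmat C θ x j i := by
  have htr : (1 - (Wmat C x)ᵀ * Matrix.diagonal θ) = (Amat C θ x)ᵀ := by
    rw [Amat, Matrix.transpose_sub, Matrix.transpose_one, Matrix.transpose_mul,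
      Matrix.diagonal_transpose]
  have hBt : (1 - Matrix.diagonal θ) * (1 - (Wmat C x)ᵀ * Matrix.diagonal θ)⁻¹
      = (Bmat C θ x)ᵀ := by
    rw [htr, ← Matrix.transpose_nonsing_inv, Bmat, Matrix.transpose_mul]
    congr 1
    rw [Matrix.transpose_sub, Matrix.transpose_one, Matrix.diagonal_transpose]
  funext i
  rw [Fmap, hBt, Matrix.mulVec, dotProduct]
  simp only [Matrix.transpose_apply]
  rw [Finset.mul_sum]
  exact Finset.sum_congr rfl fun j _ => by ring

section key
variable {n : ℕ} {C : Matrix (Fin n) (Fin n) ℝ} {θ : Fin n → ℝ}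

lemma entry_formula (W V E : Matrix (Fin n) (Fin n) ℝ) (d : Fin n → ℝ) (j i : Fin n) :
    (Matrix.diagonal θ * W * E
      + Matrix.diagonal θ * (Matrix.diagonal d * (1 - C)) * V) j i
    = θ j * ∑ l, W j l * E l i + θ j * (d j * (V j i - ∑ l, C j l * V l i)) := by
  rw [Matrix.add_apply]
  congr 1
  · rw [Matrix.mul_assoc, Matrix.diagonal_mul, Matrix.mul_apply]
  · rw [Matrix.mul_assoc, Matrix.diagonal_mul, Matrix.mul_assoc, Matrix.diagonal_mul]
    congr 1
    rw [Matrix.sub_mul, Matrix.one_mul, Matrix.sub_apply, Matrix.mul_apply]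

lemma key_bounds (hn : 0 < n)
    (θmax : ℝ) (hθub : ∀ i, θ i ≤ θmax) (hθ0 : ∀ i, 0 ≤ θ i)
    (hC0 : ∀ i j, 0 ≤ C i j) (hCrow : ∀ i, ∑ j, C i j = 1)
    (W V E : Matrix (Fin n) (Fin n) ℝ) (d : Fin n → ℝ) (R s : ℝ)
    (hW0 : ∀ i j, 0 ≤ W i j) (hW1 : ∀ i, ∑ j, W i j = 1)
    (hV0 : ∀ i j, 0 ≤ V i j) (hV1 : ∀ i, ∑ j, V i j = 1)
    (hR : ∀ j, ∑ i, |E j i| ≤ R)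
    (hd : ∀ j, |d j| ≤ s / 2) (hs : ∑ j, |d j| ≤ s) :
    (∀ j, ∑ i, |(Matrix.diagonal θ * W * E
        + Matrix.diagonal θ * (Matrix.diagonal d * (1 - C)) * V) j i|
      ≤ θmax * R + θmax * s) ∧
    (∑ i, |∑ j, (Matrix.diagonal θ * W * E
        + Matrix.diagonal θ * (Matrix.diagonal d * (1 - C)) * V) j i|
      ≤ (n:ℝ) * (θmax * R) + 2 * θmax * s) := by
  obtain ⟨j0⟩ : Nonempty (Fin n) := Fin.pos_iff_nonempty.mp hn
  have hR0 : 0 ≤ R := le_trans (Finset.sum_nonneg fun i _ => abs_nonneg _) (hR j0)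
  have hs0 : 0 ≤ s := by have := hd j0; have := abs_nonneg (d j0); linarith
  have hθmax0 : 0 ≤ θmax := le_trans (hθ0 j0) (hθub j0)
  -- bound on first term, rowwise
  have hb1 : ∀ j, ∑ i, |θ j * ∑ l, W j l * E l i| ≤ θmax * R := by
    intro j
    have : ∀ i, |θ j * ∑ l, W j l * E l i| ≤ θ j * ∑ l, W j l * |E l i| := by
      intro i
      rw [abs_mul, abs_of_nonneg (hθ0 j)]
      refine mul_le_mul_of_nonneg_left ?_ (hθ0 j)
      refine le_trans (Finset.abs_sum_le_sum_abs _ _) (Finset.sum_le_sum fun l _ => ?_)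
      rw [abs_mul, abs_of_nonneg (hW0 j l)]
    calc ∑ i, |θ j * ∑ l, W j l * E l i| ≤ ∑ i, θ j * ∑ l, W j l * |E l i| :=
          Finset.sum_le_sum fun i _ => this i
      _ = θ j * ∑ l, W j l * ∑ i, |E l i| := by
          rw [← Finset.mul_sum, Finset.sum_comm]
          congr 1
          exact Finset.sum_congr rfl fun l _ => by rw [← Finset.mul_sum]
      _ ≤ θ j * ∑ l, W j l * R := by
          refine mul_le_mul_of_nonneg_left (Finset.sum_le_sum fun l _ =>
            mul_le_mul_of_nonneg_left (hR l) (hW0 j l)) (hθ0 j)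
      _ = θ j * R := by rw [← Finset.sum_mul, hW1 j, one_mul]
      _ ≤ θmax * R := mul_le_mul_of_nonneg_right (hθub j) hR0
  -- bound on second term, rowwise
  have hb2 : ∀ j, ∑ i, |θ j * (d j * (V j i - ∑ l, C j l * V l i))|
      ≤ θ j * |d j| * 2 := by
    intro j
    have : ∀ i, |θ j * (d j * (V j i - ∑ l, C j l * V l i))|
        = θ j * |d j| * |V j i - ∑ l, C j l * V l i| := by
      intro i
      rw [abs_mul, abs_mul, abs_of_nonneg (hθ0 j), mul_assoc]
    calc ∑ i, |θ j * (d j * (V j i - ∑ l, C j l * V l i))|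
        = θ j * |d j| * ∑ i, |V j i - ∑ l, C j l * V l i| := by
          rw [Finset.mul_sum]; exact Finset.sum_congr rfl fun i _ => this i
      _ ≤ θ j * |d j| * 2 := by
          refine mul_le_mul_of_nonneg_left ?_
            (mul_nonneg (hθ0 j) (abs_nonneg _))
          calc ∑ i, |V j i - ∑ l, C j l * V l i|
              ≤ ∑ i, (V j i + ∑ l, C j l * V l i) := by
                refine Finset.sum_le_sum fun i _ => ?_
                have h1 := abs_sub (V j i) (∑ l, C j l * V l i)
                have h2 : |V j i| = V j i := abs_of_nonneg (hV0 j i)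
                have h3 : |∑ l, C j l * V l i| = ∑ l, C j l * V l i :=
                  abs_of_nonneg (Finset.sum_nonneg fun l _ =>
                    mul_nonneg (hC0 j l) (hV0 l i))
                linarith
            _ = 2 := by
                rw [Finset.sum_add_distrib, hV1 j, Finset.sum_comm]
                have : ∀ l ∈ Finset.univ, ∑ i, C j l * V l i = C j l := by
                  intro l _
                  rw [← Finset.mul_sum, hV1 l, mul_one]
                rw [Finset.sum_congr rfl this, hCrow j]
                norm_num
  have habs : ∀ j i, |(Matrix.diagonal θ * W * E
      + Matrix.diagonal θ * (Matrix.diagonal d * (1 - C)) * V) j i|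
      ≤ |θ j * ∑ l, W j l * E l i| + |θ j * (d j * (V j i - ∑ l, C j l * V l i))| := by
    intro j i
    rw [entry_formula]
    exact abs_add_le _ _
  have hrow : ∀ j, ∑ i, |(Matrix.diagonal θ * W * E
      + Matrix.diagonal θ * (Matrix.diagonal d * (1 - C)) * V) j i|
      ≤ θmax * R + θ j * |d j| * 2 := by
    intro j
    calc ∑ i, |(Matrix.diagonal θ * W * E
        + Matrix.diagonal θ * (Matrix.diagonal d * (1 - C)) * V) j i|
        ≤ ∑ i, (|θ j * ∑ l, W j l * E l i|
            + |θ j * (d j * (V j i - ∑ l, C j l * V l i))|) :=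
          Finset.sum_le_sum fun i _ => habs j i
      _ = (∑ i, |θ j * ∑ l, W j l * E l i|)
            + ∑ i, |θ j * (d j * (V j i - ∑ l, C j l * V l i))| :=
          Finset.sum_add_distrib
      _ ≤ θmax * R + θ j * |d j| * 2 := add_le_add (hb1 j) (hb2 j)
  constructor
  · intro j
    refine le_trans (hrow j) ?_
    have h1 : θ j * |d j| ≤ θmax * (s / 2) :=
      mul_le_mul (hθub j) (hd j) (abs_nonneg _) hθmax0
    linarith
  · calc ∑ i, |∑ j, (Matrix.diagonal θ * W * E
        + Matrix.diagonal θ * (Matrix.diagonal d * (1 - C)) * V) j i|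
        ≤ ∑ i, ∑ j, |(Matrix.diagonal θ * W * E
            + Matrix.diagonal θ * (Matrix.diagonal d * (1 - C)) * V) j i| :=
          Finset.sum_le_sum fun i _ => Finset.abs_sum_le_sum_abs _ _
      _ = ∑ j, ∑ i, |(Matrix.diagonal θ * W * E
            + Matrix.diagonal θ * (Matrix.diagonal d * (1 - C)) * V) j i| :=
          Finset.sum_comm
      _ ≤ ∑ j : Fin n, (θmax * R + θ j * |d j| * 2) :=
          Finset.sum_le_sum fun j _ => hrow j
      _ = (n:ℝ) * (θmax * R) + 2 * ∑ j, θ j * |d j| := by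
          rw [Finset.sum_add_distrib, Finset.sum_const, Finset.card_univ,
            Fintype.card_fin, nsmul_eq_mul, Finset.mul_sum]
          congr 1
          exact Finset.sum_congr rfl fun j _ => by ring
      _ ≤ (n:ℝ) * (θmax * R) + 2 * θmax * s := by
          have h1 : ∑ j, θ j * |d j| ≤ ∑ j, θmax * |d j| :=
            Finset.sum_le_sum fun j _ =>
              mul_le_mul_of_nonneg_right (hθub j) (abs_nonneg _)
          have h2 : ∑ j, θmax * |d j| = θmax * ∑ j, |d j| := by rw [Finset.mul_sum]
          have h3 : θmax * ∑ j, |d j| ≤ θmax * s :=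
            mul_le_mul_of_nonneg_left hs hθmax0
          linarith
end key


section main
variable {n : ℕ} {C : Matrix (Fin n) (Fin n) ℝ} {θ : Fin n → ℝ} {θmax : ℝ}

lemma half_bound {x y : Fin n → ℝ} (h : ∑ i, x i = ∑ i, y i) (j : Fin n) :
    |x j - y j| ≤ (∑ i, |x i - y i|) / 2 := by
  have hz : ∑ i, (x i - y i) = 0 := by
    rw [Finset.sum_sub_distrib, h, sub_self]
  have h1 : (x j - y j) + ∑ i ∈ Finset.univ.erase j, (x i - y i)
      = ∑ i, (x i - y i) :=
    Finset.add_sum_erase _ (fun i => x i - y i) (Finset.mem_univ j)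
  have h2 : |x j - y j| + ∑ i ∈ Finset.univ.erase j, |x i - y i| = ∑ i, |x i - y i| :=
    Finset.add_sum_erase _ (fun i => |x i - y i|) (Finset.mem_univ j)
  have h3 : |x j - y j| = |∑ i ∈ Finset.univ.erase j, (x i - y i)| := by
    rw [show x j - y j = -∑ i ∈ Finset.univ.erase j, (x i - y i) by linarith, abs_neg]
  have h4 : |∑ i ∈ Finset.univ.erase j, (x i - y i)|
      ≤ ∑ i ∈ Finset.univ.erase j, |x i - y i| := Finset.abs_sum_le_sum_abs _ _
  linarith

lemma Wmat_diff (x y : Fin n → ℝ) :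
    Wmat C x - Wmat C y = Matrix.diagonal (x - y) * (1 - C) := by
  ext i j
  rw [Matrix.sub_apply, Wmat_apply, Wmat_apply, Matrix.diagonal_mul,
    Matrix.sub_apply, Matrix.one_apply, Pi.sub_apply]
  split <;> ring

lemma Bmat_diff {x y : Fin n → ℝ} (hAx : IsUnit (Amat C θ x).det)
    (hAy : IsUnit (Amat C θ y).det) :
    Bmat C θ x - Bmat C θ y
      = Matrix.diagonal θ * Wmat C x * (Bmat C θ x - Bmat C θ y)
        + Matrix.diagonal θ * (Matrix.diagonal (x - y) * (1 - C)) * Bmat C θ y := by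
  have hx := Bmat_eq (C := C) (θ := θ) (x := x) hAx
  have hy := Bmat_eq (C := C) (θ := θ) (x := y) hAy
  have hW := Wmat_diff (C := C) x y
  have h1 : Bmat C θ x - Bmat C θ y
      = Matrix.diagonal θ * Wmat C x * Bmat C θ x
        - Matrix.diagonal θ * Wmat C y * Bmat C θ y := by
    conv_lhs => rw [hx, hy]
    abel
  rw [← hW]
  have h2 : Matrix.diagonal θ * Wmat C x * (Bmat C θ x - Bmat C θ y)
      + Matrix.diagonal θ * (Wmat C x - Wmat C y) * Bmat C θ y
      = Matrix.diagonal θ * Wmat C x * Bmat C θ x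
        - Matrix.diagonal θ * Wmat C y * Bmat C θ y := by
    rw [Matrix.mul_sub, Matrix.mul_sub, Matrix.sub_mul]
    abel
  rw [h2]
  exact h1

lemma simplex_le_one {x : Fin n → ℝ} (hx : x ∈ simplex n) (i : Fin n) : x i ≤ 1 := by
  obtain ⟨h0, h1⟩ := hx
  calc x i ≤ ∑ j, x j := Finset.single_le_sum (fun j _ => h0 j) (Finset.mem_univ i)
    _ = 1 := h1

lemma hW_of_simplex (hC0 : ∀ i j, 0 ≤ C i j) (hCrow : ∀ i, ∑ j, C i j = 1)
    {x : Fin n → ℝ} (hx : x ∈ simplex n) :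
    (∀ i j, 0 ≤ Wmat C x i j) ∧ (∀ i, ∑ j, Wmat C x i j = 1) :=
  ⟨Wmat_nonneg C x hC0 hx.1 (simplex_le_one hx), Wmat_row C x hCrow⟩

lemma hA_of_simplex (hC0 : ∀ i j, 0 ≤ C i j) (hCrow : ∀ i, ∑ j, C i j = 1)
    (hθ0 : ∀ i, 0 ≤ θ i) (hθ1 : ∀ i, θ i < 1)
    {x : Fin n → ℝ} (hx : x ∈ simplex n) : IsUnit (Amat C θ x).det :=
  Amat_isUnit hθ1 (hW_of_simplex hC0 hCrow hx).1 (hW_of_simplex hC0 hCrow hx).2 hθ0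

lemma F_mem_simplex (hn : 0 < n) (hC0 : ∀ i j, 0 ≤ C i j) (hCrow : ∀ i, ∑ j, C i j = 1)
    (hθ0 : ∀ i, 0 ≤ θ i) (hθ1 : ∀ i, θ i < 1)
    {x : Fin n → ℝ} (hx : x ∈ simplex n) : Fmap C θ x ∈ simplex n := by
  have hA := hA_of_simplex hC0 hCrow hθ0 hθ1 hx
  have hW := hW_of_simplex hC0 hCrow hx
  rw [Fmap_eq hA]
  have hnR : (0:ℝ) < n := Nat.cast_pos.mpr hn
  constructor
  · intro i
    refine mul_nonneg (by positivity) (Finset.sum_nonneg fun j _ =>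
      Bmat_nonneg hA hθ0 hθ1 hW.1 hW.2 j i)
  · rw [← Finset.mul_sum, Finset.sum_comm]
    have : ∀ j ∈ Finset.univ, ∑ i, Bmat C θ x j i = 1 := fun j _ =>
      Bmat_rowsum hA hθ1 hθ0 hW.1 hW.2 j
    rw [Finset.sum_congr rfl this, Finset.sum_const, Finset.card_univ, Fintype.card_fin,
      nsmul_eq_mul, mul_one]
    field_simp

lemma F_contract (hn : 0 < n) (hC0 : ∀ i j, 0 ≤ C i j) (hCrow : ∀ i, ∑ j, C i j = 1)
    (hθ0 : ∀ i, 0 ≤ θ i) (hθ1 : ∀ i, θ i < 1)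
    (hθub : ∀ i, θ i ≤ θmax) (hθm1 : θmax < 1)
    {x y : Fin n → ℝ} (hx : x ∈ simplex n) (hy : y ∈ simplex n) :
    ∑ i, |Fmap C θ x i - Fmap C θ y i|
      ≤ (θmax * (θmax / (1 - θmax)) + 2 * θmax / n) * ∑ j, |x j - y j| := by
  obtain ⟨j0⟩ : Nonempty (Fin n) := Fin.pos_iff_nonempty.mp hn
  have hθmax0 : 0 ≤ θmax := le_trans (hθ0 j0) (hθub j0)
  have h1θ : (0:ℝ) < 1 - θmax := by linarith
  have hnR : (0:ℝ) < n := Nat.cast_pos.mpr hn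
  have hAx := hA_of_simplex hC0 hCrow hθ0 hθ1 hx
  have hAy := hA_of_simplex hC0 hCrow hθ0 hθ1 hy
  have hWx := hW_of_simplex hC0 hCrow hx
  have hVy0 : ∀ i j, 0 ≤ Bmat C θ y i j :=
    Bmat_nonneg hAy hθ0 hθ1 (hW_of_simplex hC0 hCrow hy).1 (hW_of_simplex hC0 hCrow hy).2
  have hVy1 : ∀ i, ∑ j, Bmat C θ y i j = 1 :=
    Bmat_rowsum hAy hθ1 hθ0 (hW_of_simplex hC0 hCrow hy).1 (hW_of_simplex hC0 hCrow hy).2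
  set D : Matrix (Fin n) (Fin n) ℝ := Bmat C θ x - Bmat C θ y with hD
  set s : ℝ := ∑ j, |x j - y j| with hs
  have hs0 : 0 ≤ s := Finset.sum_nonneg fun j _ => abs_nonneg _
  have hne : (Finset.univ : Finset (Fin n)).Nonempty := ⟨j0, Finset.mem_univ j0⟩
  set R : ℝ := Finset.univ.sup' hne (fun j => ∑ i, |D j i|) with hR
  have hRle : ∀ j, ∑ i, |D j i| ≤ R := fun j =>
    Finset.le_sup' (fun j => ∑ i, |D j i|) (Finset.mem_univ j)
  have hdj : ∀ j, |x j - y j| ≤ s / 2 := fun j => half_bound (hx.2.trans hy.2.symm) j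
  have hK := key_bounds hn θmax hθub hθ0 hC0 hCrow (Wmat C x) (Bmat C θ y) D
    (x - y) R s hWx.1 hWx.2 hVy0 hVy1 hRle (fun j => hdj j) (le_of_eq rfl)
  rw [← Bmat_diff hAx hAy] at hK
  have hRrec : R ≤ θmax * R + θmax * s := by
    refine Finset.sup'_le hne _ fun j _ => hK.1 j
  have hRb : R ≤ θmax * s / (1 - θmax) := by
    rw [le_div_iff₀ h1θ]
    nlinarith
  have hFd : ∀ i, Fmap C θ x i - Fmap C θ y i = (1 / (n:ℝ)) * ∑ j, D j i := by
    intro i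
    rw [Fmap_eq hAx, Fmap_eq hAy]
    simp only [hD, Matrix.sub_apply]
    rw [Finset.sum_sub_distrib]
    ring
  calc ∑ i, |Fmap C θ x i - Fmap C θ y i|
      = (1 / (n:ℝ)) * ∑ i, |∑ j, D j i| := by
        rw [Finset.mul_sum]
        refine Finset.sum_congr rfl fun i _ => ?_
        rw [hFd i, abs_mul, abs_of_nonneg (by positivity : (0:ℝ) ≤ 1 / (n:ℝ))]
    _ ≤ (1 / (n:ℝ)) * ((n:ℝ) * (θmax * R) + 2 * θmax * s) := by
        refine mul_le_mul_of_nonneg_left hK.2 (by positivity)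
    _ = θmax * R + 2 * θmax / n * s := by field_simp
    _ ≤ θmax * (θmax * s / (1 - θmax)) + 2 * θmax / n * s := by
        have := mul_le_mul_of_nonneg_left hRb hθmax0
        linarith
    _ = (θmax * (θmax / (1 - θmax)) + 2 * θmax / n) * s := by field_simp


lemma exists_fixed (hn : 2 ≤ n) (hC0 : ∀ i j, 0 ≤ C i j) (hCrow : ∀ i, ∑ j, C i j = 1)
    (hθ0 : ∀ i, 0 ≤ θ i) (hθ1 : ∀ i, θ i < 1) (hθub : ∀ i, θ i ≤ θmax)
    (hcond : θmax < 1 / 2) :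
    ∃ xstar, xstar ∈ simplex n ∧ Fmap C θ xstar = xstar := by
  have hn0 : 0 < n := by omega
  obtain ⟨j0⟩ : Nonempty (Fin n) := Fin.pos_iff_nonempty.mp hn0
  have hθmax0 : 0 ≤ θmax := le_trans (hθ0 j0) (hθub j0)
  have hθm1 : θmax < 1 := by linarith
  have h1θ : (0:ℝ) < 1 - θmax := by linarith
  have hnR : (0:ℝ) < n := Nat.cast_pos.mpr hn0
  have hn2 : (2:ℝ) ≤ n := by exact_mod_cast hn
  set q : ℝ := θmax * (θmax / (1 - θmax)) + 2 * θmax / n with hqdef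
  have hq0 : 0 ≤ q := by positivity
  have hq1 : q < 1 := by
    have h2n : 2 * θmax / n ≤ θmax := by
      rw [div_le_iff₀ hnR]
      nlinarith
    have hd1 : θmax / (1 - θmax) < 1 := (div_lt_one h1θ).mpr (by linarith)
    have h3 : θmax * (θmax / (1 - θmax)) ≤ θmax * 1 :=
      mul_le_mul_of_nonneg_left hd1.le hθmax0
    rw [hqdef]
    nlinarith
  set x0 : Fin n → ℝ := fun _ => 1 / (n:ℝ) with hx0
  have hx0mem : x0 ∈ simplex n := by
    constructor
    · intro i; positivity
    · simp only [hx0, Finset.sum_const, Finset.card_univ, Fintype.card_fin, nsmul_eq_mul]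
      field_simp
  set seq : ℕ → Fin n → ℝ := fun m => (Fmap C θ)^[m] x0 with hseq
  have hseqS : ∀ m, seq (m+1) = Fmap C θ (seq m) := fun m =>
    Function.iterate_succ_apply' _ _ _
  have hmem : ∀ m, seq m ∈ simplex n := by
    intro m; induction m with
    | zero => exact hx0mem
    | succ m ih => rw [hseqS]; exact F_mem_simplex hn0 hC0 hCrow hθ0 hθ1 ih
  have hstep : ∀ m, ∑ i, |seq (m+1) i - seq m i| ≤ 2 * q ^ m := by
    intro m; induction m with
    | zero =>
      calc ∑ i, |seq 1 i - seq 0 i| ≤ ∑ i, (seq 1 i + seq 0 i) := by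
            refine Finset.sum_le_sum fun i _ => ?_
            have h1 := abs_sub (seq 1 i) (seq 0 i)
            rw [abs_of_nonneg ((hmem 1).1 i), abs_of_nonneg ((hmem 0).1 i)] at h1
            exact h1
        _ = 2 := by
            rw [Finset.sum_add_distrib, (hmem 1).2, (hmem 0).2]; norm_num
        _ = 2 * q ^ 0 := by norm_num
    | succ m ih =>
      have h := F_contract hn0 hC0 hCrow hθ0 hθ1 hθub hθm1 (hmem (m+1)) (hmem m)
      rw [← hseqS, ← hseqS] at h
      calc ∑ i, |seq (m+1+1) i - seq (m+1) i| ≤ q * ∑ j, |seq (m+1) j - seq m j| := h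
        _ ≤ q * (2 * q ^ m) := mul_le_mul_of_nonneg_left ih hq0
        _ = 2 * q ^ (m+1) := by ring
  have hdist : ∀ m, dist (seq m) (seq (m+1)) ≤ 2 * q ^ m := by
    intro m
    rw [dist_pi_le_iff (by positivity)]
    intro i
    rw [Real.dist_eq]
    calc |seq m i - seq (m+1) i| = |seq (m+1) i - seq m i| := abs_sub_comm _ _
      _ ≤ ∑ i', |seq (m+1) i' - seq m i'| :=
          Finset.single_le_sum (f := fun i' => |seq (m+1) i' - seq m i'|)
            (fun i' _ => abs_nonneg _) (Finset.mem_univ i)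
      _ ≤ 2 * q ^ m := hstep m
  have hcauchy : CauchySeq seq := cauchySeq_of_le_geometric q 2 hq1 hdist
  obtain ⟨xstar, hxlim⟩ := cauchySeq_tendsto_of_complete hcauchy
  have hco : ∀ i, Filter.Tendsto (fun m => seq m i) Filter.atTop (nhds (xstar i)) :=
    fun i => tendsto_pi_nhds.mp hxlim i
  have hxsmem : xstar ∈ simplex n := by
    constructor
    · intro i
      exact ge_of_tendsto (hco i) (Filter.Eventually.of_forall fun m => (hmem m).1 i)
    · have h1 : Filter.Tendsto (fun m => ∑ i, seq m i) Filter.atTop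
          (nhds (∑ i, xstar i)) := tendsto_finset_sum _ (fun i _ => hco i)
      have h2 : (fun m => ∑ i, seq m i) = fun _ => (1:ℝ) := funext fun m => (hmem m).2
      rw [h2] at h1
      exact (tendsto_nhds_unique tendsto_const_nhds h1).symm ▸ rfl
  have hsum0 : Filter.Tendsto (fun m => ∑ i, |seq m i - xstar i|) Filter.atTop
      (nhds 0) := by
    have h : ∀ i ∈ Finset.univ, Filter.Tendsto (fun m => |seq m i - xstar i|)
        Filter.atTop (nhds 0) := by
      intro i _
      have h1 : Filter.Tendsto (fun m => seq m i - xstar i) Filter.atTop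
          (nhds (xstar i - xstar i)) := (hco i).sub tendsto_const_nhds
      rw [sub_self] at h1
      have h2 := h1.abs
      rw [abs_zero] at h2
      exact h2
    simpa using tendsto_finset_sum Finset.univ h
  have hFseq : Filter.Tendsto (fun m => seq (m+1)) Filter.atTop (nhds xstar) :=
    hxlim.comp (Filter.tendsto_add_atTop_nat 1)
  have hFlim : Filter.Tendsto (fun m => seq (m+1)) Filter.atTop
      (nhds (Fmap C θ xstar)) := by
    rw [tendsto_iff_dist_tendsto_zero]
    refine squeeze_zero (fun m => dist_nonneg)
      (g := fun m => q * ∑ i, |seq m i - xstar i|) ?_ ?_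
    · intro m
      have hnn : 0 ≤ q * ∑ i, |seq m i - xstar i| :=
        mul_nonneg hq0 (Finset.sum_nonneg fun i _ => abs_nonneg _)
      rw [dist_pi_le_iff hnn]
      intro i
      rw [Real.dist_eq]
      have hcon := F_contract hn0 hC0 hCrow hθ0 hθ1 hθub hθm1 (hmem m) hxsmem
      calc |seq (m+1) i - Fmap C θ xstar i|
          = |Fmap C θ (seq m) i - Fmap C θ xstar i| := by rw [hseqS]
        _ ≤ ∑ i', |Fmap C θ (seq m) i' - Fmap C θ xstar i'| :=
            Finset.single_le_sum (f := fun i' => |Fmap C θ (seq m) i' - Fmap C θ xstar i'|)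
              (fun i' _ => abs_nonneg _) (Finset.mem_univ i)
        _ ≤ q * ∑ j, |seq m j - xstar j| := hcon
    · simpa using hsum0.const_mul q
  exact ⟨xstar, hxsmem, tendsto_nhds_unique hFlim hFseq⟩


lemma step_identity {W Ws Vk Vk' Vs : Matrix (Fin n) (Fin n) ℝ} {d : Fin n → ℝ}
    (hVk : Vk' = Matrix.diagonal θ * W * Vk + (1 - Matrix.diagonal θ))
    (hVs : Vs = (1 - Matrix.diagonal θ) + Matrix.diagonal θ * Ws * Vs)
    (hWd : W - Ws = Matrix.diagonal d * (1 - C)) :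
    Vk' - Vs = Matrix.diagonal θ * W * (Vk - Vs)
      + Matrix.diagonal θ * (Matrix.diagonal d * (1 - C)) * Vs := by
  rw [hVk, ← hWd]
  conv_lhs => rw [hVs]
  noncomm_ring

end main

theorem stmt19 (n : ℕ) (hn : 2 ≤ n) (C : Matrix (Fin n) (Fin n) ℝ)
    (hCnonneg : ∀ i j, 0 ≤ C i j) (hCrow : ∀ i, ∑ j, C i j = 1)
    (hCdiag : ∀ i, C i i = 0)
    (θ : Fin n → ℝ) (hθ0 : ∀ i, 0 ≤ θ i) (hθ1 : ∀ i, θ i < 1) (hθex : ∃ j, 0 < θ j)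
    (θmax : ℝ) (hθmax : IsGreatest (Set.range θ) θmax)
    (hcond : θmax < 1 / 2) :
    ∃ xstar : Fin n → ℝ,
      (xstar ∈ simplex n ∧ Fmap C θ xstar = xstar) ∧
      (∀ y, y ∈ simplex n ∧ Fmap C θ y = y → y = xstar) ∧
      ∀ (V : ℕ → Matrix (Fin n) (Fin n) ℝ) (x : ℕ → Fin n → ℝ),
        V 0 = 1 → x 0 ∈ simplex n →
        (∀ k, V (k + 1) =
          Matrix.diagonal θ * Wmat C (x k) * V k + (1 - Matrix.diagonal θ)) →
        (∀ k, x (k + 1) = (n : ℝ)⁻¹ • (V (k + 1))ᵀ.mulVec (fun _ => 1)) →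
        ∃ M ≥ (0 : ℝ), ∀ k, ‖x k - xstar‖ ≤ M * (2 * θmax) ^ k := by
  have hθub : ∀ i, θ i ≤ θmax := fun i => hθmax.2 ⟨i, rfl⟩
  obtain ⟨jm, hjm⟩ := hθmax.1
  have hθmax0 : 0 ≤ θmax := hjm ▸ hθ0 jm
  have hθm1 : θmax < 1 := by linarith
  have h1θ : (0:ℝ) < 1 - θmax := by linarith
  have hn0 : 0 < n := by omega
  have hnR : (0:ℝ) < n := Nat.cast_pos.mpr hn0
  have hn2 : (2:ℝ) ≤ n := by exact_mod_cast hn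
  have hq1 : θmax * (θmax / (1 - θmax)) + 2 * θmax / n < 1 := by
    have h2n : 2 * θmax / (n:ℝ) ≤ θmax := by
      rw [div_le_iff₀ hnR]
      nlinarith
    have hd1 : θmax / (1 - θmax) < 1 := (div_lt_one h1θ).mpr (by linarith)
    have h3 : θmax * (θmax / (1 - θmax)) ≤ θmax * 1 :=
      mul_le_mul_of_nonneg_left hd1.le hθmax0
    nlinarith
  obtain ⟨xstar, hxsmem, hxsfix⟩ := exists_fixed hn hCnonneg hCrow hθ0 hθ1 hθub hcond
  refine ⟨xstar, ⟨hxsmem, hxsfix⟩, ?_, ?_⟩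
  · -- uniqueness
    rintro y ⟨hymem, hyfix⟩
    have hcon := F_contract hn0 hCnonneg hCrow hθ0 hθ1 hθub hθm1 hymem hxsmem
    rw [hyfix, hxsfix] at hcon
    set S := ∑ j, |y j - xstar j| with hS
    have hS0 : 0 ≤ S := Finset.sum_nonneg fun j _ => abs_nonneg _
    have hSz : S = 0 := by nlinarith
    funext i
    have h1 : |y i - xstar i| ≤ S :=
      Finset.single_le_sum (f := fun j => |y j - xstar j|)
        (fun j _ => abs_nonneg _) (Finset.mem_univ i)
    have : |y i - xstar i| = 0 := le_antisymm (hSz ▸ h1) (abs_nonneg _)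
    have := abs_eq_zero.mp this
    linarith
  · -- trajectory
    intro V x hV0 hx0 hVrec hxrec
    set Vs := Bmat C θ xstar with hVsdef
    have hAxs := hA_of_simplex hCnonneg hCrow hθ0 hθ1 hxsmem
    have hWs := hW_of_simplex hCnonneg hCrow hxsmem
    have hVs0 : ∀ i j, 0 ≤ Vs i j := Bmat_nonneg hAxs hθ0 hθ1 hWs.1 hWs.2
    have hVs1 : ∀ i, ∑ j, Vs i j = 1 := Bmat_rowsum hAxs hθ1 hθ0 hWs.1 hWs.2
    have hVsid : Vs = (1 - Matrix.diagonal θ) + Matrix.diagonal θ * Wmat C xstar * Vs :=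
      Bmat_eq hAxs
    have hxs_eq : ∀ i, xstar i = (1 / (n:ℝ)) * ∑ j, Vs j i := by
      intro i
      conv_lhs => rw [← hxsfix]
      rw [Fmap_eq hAxs]
    have hxentry : ∀ k i, x (k+1) i = (1 / (n:ℝ)) * ∑ j, V (k+1) j i := by
      intro k i
      rw [hxrec k]
      simp [Matrix.mulVec, dotProduct, Matrix.transpose_apply, one_div]
    have hVprops : ∀ k, (∀ i j, 0 ≤ V k i j) ∧ (∀ i, ∑ j, V k i j = 1) := by
      intro k
      induction k with
      | zero =>
        rw [hV0]
        constructor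
        · intro i j
          rw [Matrix.one_apply]
          split <;> norm_num
        · intro i
          simp [Matrix.one_apply]
      | succ k ih =>
        have hxk : ∀ i, 0 ≤ x k i ∧ x k i ≤ 1 := by
          cases k with
          | zero => exact fun i => ⟨hx0.1 i, simplex_le_one hx0 i⟩
          | succ m =>
            intro i
            rw [hxentry m i]
            have hsum : ∑ j, V (m+1) j i ≤ (n:ℝ) := by
              calc ∑ j, V (m+1) j i ≤ ∑ _j : Fin n, (1:ℝ) := by
                    refine Finset.sum_le_sum fun j _ => ?_
                    calc V (m+1) j i ≤ ∑ l, V (m+1) j l :=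
                          Finset.single_le_sum (f := fun l => V (m+1) j l)
                            (fun l _ => ih.1 j l) (Finset.mem_univ i)
                      _ = 1 := ih.2 j
                _ = (n:ℝ) := by simp
            have hpos : 0 ≤ ∑ j, V (m+1) j i :=
              Finset.sum_nonneg fun j _ => ih.1 j i
            constructor
            · positivity
            · rw [div_mul_eq_mul_div, div_le_one hnR, one_mul]
              exact hsum
        have hWk0 : ∀ i j, 0 ≤ Wmat C (x k) i j :=
          Wmat_nonneg C (x k) hCnonneg (fun i => (hxk i).1) (fun i => (hxk i).2)
        have hWk1 : ∀ i, ∑ j, Wmat C (x k) i j = 1 := Wmat_row C (x k) hCrow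
        have hentry : ∀ i j, V (k+1) i j
            = θ i * (∑ l, Wmat C (x k) i l * V k l j)
              + (if i = j then 1 - θ i else 0) := by
          intro i j
          rw [hVrec k, Matrix.add_apply, Matrix.mul_assoc, Matrix.diagonal_mul,
            Matrix.mul_apply]
          congr 1
          simp [Matrix.sub_apply, Matrix.one_apply, Matrix.diagonal_apply]
          split <;> simp
        constructor
        · intro i j
          rw [hentry i j]
          have h1 : 0 ≤ θ i * ∑ l, Wmat C (x k) i l * V k l j :=
            mul_nonneg (hθ0 i) (Finset.sum_nonneg fun l _ =>
              mul_nonneg (hWk0 i l) (ih.1 l j))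
          have h2 : (0:ℝ) ≤ if i = j then 1 - θ i else 0 := by
            split
            · linarith [hθ1 i]
            · exact le_refl 0
          linarith
        · intro i
          have : ∑ j, V (k+1) i j
              = θ i * (∑ l, Wmat C (x k) i l * ∑ j, V k l j) + (1 - θ i) := by
            rw [Finset.sum_congr rfl fun j _ => hentry i j, Finset.sum_add_distrib,
              Finset.sum_ite_eq, if_pos (Finset.mem_univ i), ← Finset.mul_sum,
              Finset.sum_comm]
            congr 2
            refine Finset.sum_congr rfl fun l _ => ?_
            rw [← Finset.mul_sum]
          rw [this]
          have h1 : ∑ l, Wmat C (x k) i l * ∑ j, V k l j = 1 := by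
            rw [Finset.sum_congr rfl fun l _ => by rw [ih.2 l, mul_one], hWk1 i]
          rw [h1]
          ring
    have hxmem : ∀ k, x k ∈ simplex n := by
      intro k
      cases k with
      | zero => exact hx0
      | succ m =>
        constructor
        · intro i
          rw [hxentry m i]
          exact mul_nonneg (by positivity)
            (Finset.sum_nonneg fun j _ => (hVprops (m+1)).1 j i)
        · calc ∑ i, x (m+1) i
              = (1 / (n:ℝ)) * ∑ i, ∑ j, V (m+1) j i := by
                rw [Finset.mul_sum]
                exact Finset.sum_congr rfl fun i _ => hxentry m i
            _ = 1 := by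
              rw [Finset.sum_comm,
                Finset.sum_congr rfl fun j (_ : j ∈ Finset.univ) => (hVprops (m+1)).2 j]
              simp
              field_simp
    -- the main induction
    have hmain : ∀ k, (∀ j, ∑ i, |V k j i - Vs j i| ≤ 2 * (2 * θmax) ^ k)
        ∧ (∑ i, |x k i - xstar i| ≤ 2 * (2 * θmax) ^ k) := by
      intro k
      induction k with
      | zero =>
        constructor
        · intro j
          rw [hV0]
          calc ∑ i, |(1 : Matrix (Fin n) (Fin n) ℝ) j i - Vs j i|
              ≤ ∑ i, ((1 : Matrix (Fin n) (Fin n) ℝ) j i + Vs j i) := by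
                refine Finset.sum_le_sum fun i _ => ?_
                have h1 := abs_sub ((1 : Matrix (Fin n) (Fin n) ℝ) j i) (Vs j i)
                have h2 : |(1 : Matrix (Fin n) (Fin n) ℝ) j i|
                    = (1 : Matrix (Fin n) (Fin n) ℝ) j i := by
                  rw [Matrix.one_apply]
                  split <;> simp
                have h3 : |Vs j i| = Vs j i := abs_of_nonneg (hVs0 j i)
                linarith
            _ = 1 + 1 := by
                rw [Finset.sum_add_distrib, hVs1 j]
                congr 1
                simp [Matrix.one_apply]
            _ ≤ 2 * (2 * θmax) ^ 0 := by norm_num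
        · calc ∑ i, |x 0 i - xstar i|
              ≤ ∑ i, (x 0 i + xstar i) := by
                refine Finset.sum_le_sum fun i _ => ?_
                have h1 := abs_sub (x 0 i) (xstar i)
                rw [abs_of_nonneg (hx0.1 i), abs_of_nonneg (hxsmem.1 i)] at h1
                exact h1
            _ = 2 := by rw [Finset.sum_add_distrib, hx0.2, hxsmem.2]; norm_num
            _ ≤ 2 * (2 * θmax) ^ 0 := by norm_num
      | succ k ih =>
        have hWk := hW_of_simplex hCnonneg hCrow (hxmem k)
        have hWdiff : Wmat C (x k) - Wmat C xstar
            = Matrix.diagonal (x k - xstar) * (1 - C) := Wmat_diff (x k) xstar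
        have hE' : V (k+1) - Vs
            = Matrix.diagonal θ * Wmat C (x k) * (V k - Vs)
              + Matrix.diagonal θ * (Matrix.diagonal (x k - xstar) * (1 - C)) * Vs :=
          step_identity (hVrec k) hVsid hWdiff
        have hRle : ∀ j, ∑ i, |(V k - Vs) j i| ≤ 2 * (2 * θmax) ^ k := by
          intro j
          simpa [Matrix.sub_apply] using ih.1 j
        have hdj : ∀ j, |(x k - xstar) j| ≤ (2 * (2 * θmax) ^ k) / 2 := by
          intro j
          have hhalf := half_bound (x := x k) (y := xstar)
            ((hxmem k).2.trans hxsmem.2.symm) j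
          have : ∑ i, |x k i - xstar i| ≤ 2 * (2 * θmax) ^ k := ih.2
          rw [Pi.sub_apply]
          linarith
        have hsle : ∑ j, |(x k - xstar) j| ≤ 2 * (2 * θmax) ^ k := by
          simpa [Pi.sub_apply] using ih.2
        have hK := key_bounds hn0 θmax hθub hθ0 hCnonneg hCrow
          (Wmat C (x k)) Vs (V k - Vs) (x k - xstar)
          (2 * (2 * θmax) ^ k) (2 * (2 * θmax) ^ k)
          hWk.1 hWk.2 hVs0 hVs1 hRle hdj hsle
        rw [← hE'] at hK
        have hpow : (0:ℝ) ≤ (2 * θmax) ^ k := by positivity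
        constructor
        · intro j
          have h := hK.1 j
          calc ∑ i, |V (k+1) j i - Vs j i|
              = ∑ i, |(V (k+1) - Vs) j i| := by
                refine Finset.sum_congr rfl fun i _ => ?_
                rw [Matrix.sub_apply]
            _ ≤ θmax * (2 * (2 * θmax) ^ k) + θmax * (2 * (2 * θmax) ^ k) := h
            _ = 2 * (2 * θmax) ^ (k+1) := by ring
        · have hxd : ∀ i, x (k+1) i - xstar i
              = (1 / (n:ℝ)) * ∑ j, (V (k+1) - Vs) j i := by
            intro i
            rw [hxentry k i, hxs_eq i, ← mul_sub]
            congr 1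
            rw [← Finset.sum_sub_distrib]
            exact Finset.sum_congr rfl fun j _ => (Matrix.sub_apply _ _ _ _).symm
          calc ∑ i, |x (k+1) i - xstar i|
              = (1 / (n:ℝ)) * ∑ i, |∑ j, (V (k+1) - Vs) j i| := by
                rw [Finset.mul_sum]
                refine Finset.sum_congr rfl fun i _ => ?_
                rw [hxd i, abs_mul, abs_of_nonneg (by positivity : (0:ℝ) ≤ 1 / (n:ℝ))]
            _ ≤ (1 / (n:ℝ)) * ((n:ℝ) * (θmax * (2 * (2 * θmax) ^ k))
                  + 2 * θmax * (2 * (2 * θmax) ^ k)) :=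
                mul_le_mul_of_nonneg_left hK.2 (by positivity)
            _ = 2 * θmax * (2 * θmax) ^ k + (4 * θmax / n) * (2 * θmax) ^ k := by
                field_simp
                ring
            _ ≤ 2 * θmax * (2 * θmax) ^ k + 2 * θmax * (2 * θmax) ^ k := by
                have h4n : 4 * θmax / (n:ℝ) ≤ 2 * θmax := by
                  rw [div_le_iff₀ hnR]
                  nlinarith
                nlinarith
            _ = 2 * (2 * θmax) ^ (k+1) := by ring
    refine ⟨2, by norm_num, ?_⟩
    intro k
    have hb : (0:ℝ) ≤ 2 * (2 * θmax) ^ k := by positivity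
    rw [show (2:ℝ) * (2 * θmax) ^ k = 2 * (2 * θmax) ^ k from rfl] at hb
    have : ‖x k - xstar‖ ≤ 2 * (2 * θmax) ^ k := by
      rw [pi_norm_le_iff_of_nonneg hb]
      intro i
      rw [Pi.sub_apply, Real.norm_eq_abs]
      calc |x k i - xstar i| ≤ ∑ i', |x k i' - xstar i'| :=
            Finset.single_le_sum (f := fun i' => |x k i' - xstar i'|)
              (fun i' _ => abs_nonneg _) (Finset.mem_univ i)
        _ ≤ 2 * (2 * θmax) ^ k := (hmain k).2
    exact this
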